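/- arXiv:2603.21490 — 4 statements merged into one kernel-verified Lean document; each statement's English description precedes it below -/
import Mathlib

section
/- The polynomial p(y) = 4061245152630328137981 y^{12} + 4077560173170236734684710 y^{10} - 104378137212291977844887868 y^{8} - 4484512641017853031179075270 y^{6} + 135673322742635307737680349343 y^{4} - 229732179325278720034298507440 y^{2} + 112359769561546903428467326544 has no real roots, and hence p(y) > 0 for all real y. -/
theorem key_pos (x : ℝ) (hx : 0 ≤ x) :
    4061245152630328137981 * x^6 + 4077560173170236734684710 * x^5
      - 104378137212291977844887868 * x^4 - 4484512641017853031179075270 * x^3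
      + 135673322742635307737680349343 * x^2 - 229732179325278720034298507440 * x
      + 112359769561546903428467326544 > 0 := by
  nlinarith [sq_nonneg (x - 884/1000), sq_nonneg (x - 28656/1000), sq_nonneg (x*x - 29*x),
    sq_nonneg x, mul_nonneg hx (sq_nonneg (x-884/1000)), mul_nonneg hx (sq_nonneg (x-28656/1000)),
    sq_nonneg (x*x - 57*x + 868), mul_nonneg (mul_nonneg hx hx) hx]

theorem stmt_2 :
    (∀ y : ℝ,
      4061245152630328137981 * y^12 + 4077560173170236734684710 * y^10
        - 104378137212291977844887868 * y^8 - 4484512641017853031179075270 * y^6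
        + 135673322742635307737680349343 * y^4 - 229732179325278720034298507440 * y^2
        + 112359769561546903428467326544 ≠ 0) ∧
    (∀ y : ℝ,
      4061245152630328137981 * y^12 + 4077560173170236734684710 * y^10
        - 104378137212291977844887868 * y^8 - 4484512641017853031179075270 * y^6
        + 135673322742635307737680349343 * y^4 - 229732179325278720034298507440 * y^2
        + 112359769561546903428467326544 > 0) := by
  have h : ∀ y : ℝ,
      4061245152630328137981 * y^12 + 4077560173170236734684710 * y^10
        - 104378137212291977844887868 * y^8 - 4484512641017853031179075270 * y^6
        + 135673322742635307737680349343 * y^4 - 229732179325278720034298507440 * y^2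
        + 112359769561546903428467326544 > 0 := by
    intro y
    have := key_pos (y^2) (sq_nonneg y)
    nlinarith [this]
  exact ⟨fun y => ne_of_gt (h y), h⟩
end

section
/- Define P(x) = (1/14912370)|Σ_{k=0}^{16} c_k e^{ikx}|^2 where c_0 = 4, c_1 = -8, c_2 = 2, c_3 = 20, c_4 = -9, c_5 = -34, c_6 = 27, c_7 = 91, c_8 = -27, c_9 = -201, c_{10} = 32, c_{11} = 895, c_{12} = 1949, c_{13} = 2389, c_{14} = 1896, c_{15} = 949, c_{16} = 239. Then P(x) ≥ 0 for all real x, P(x) = Σ_{k=0}^{16} a_k cos(kx) with all a_k ≥ 0, a_0 = 1, and a_1 = 865534/497079 > a_0. -/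
open Finset

/-- The coefficients `c_k` of the degree-16 polynomial. -/
noncomputable def cCoeff : ℕ → ℝ := fun k =>
  ([4, -8, 2, 20, -9, -34, 27, 91, -27, -201, 32, 895, 1949, 2389, 1896, 949, 239] : List ℝ).getD k 0

/-- The Fourier cosine coefficients `a_j` of `P`. -/
noncomputable def aCoeff : ℕ → ℝ := fun j =>
  if j = 0 then (∑ k ∈ range 17, (cCoeff k)^2) / 14912370
  else 2 * (∑ k ∈ range 17, cCoeff k * cCoeff (k + j)) / 14912370

/-- The trigonometric polynomial `P`. -/
noncomputable def Ptrig (x : ℝ) : ℝ :=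
  (1 / 14912370) * (‖∑ k ∈ range 17, (cCoeff k : ℂ)
    * Complex.exp (Complex.I * (k : ℂ) * (x : ℂ))‖)^2

/-!
Expanding the squared modulus gives `|∑ c_k e^{ikx}|² = ∑_{k,l} c_k c_l cos((k - l)x)`; since the
summand is symmetric in `k, l`, this is twice the sum over `l ≤ k` minus the diagonal, and
reindexing that triangle by `j = k - l` collects the coefficient of `cos(jx)` into the
autocorrelation `∑_k c_k c_{k+j}`. What is left about the `a_k` is finite rational arithmetic.
-/

lemma norm_sum_mul_exp_sq (c : ℕ → ℝ) (N : ℕ) (x : ℝ) :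
    ‖∑ k ∈ range N, (c k : ℂ) * Complex.exp (Complex.I * k * x)‖ ^ 2 =
      ∑ k ∈ range N, ∑ l ∈ range N, c k * c l * Real.cos ((k - l : ℝ) * x) := by
  have hterm : ∀ k l : ℕ, ((c k : ℂ) * Complex.exp (Complex.I * k * x) *
      starRingEnd ℂ ((c l : ℂ) * Complex.exp (Complex.I * l * x))).re =
        c k * c l * Real.cos ((k - l : ℝ) * x) := fun k l => by
    rw [map_mul, ← Complex.exp_conj, Complex.conj_ofReal]
    rw [show (c k : ℂ) * Complex.exp (Complex.I * k * x) *
        ((c l : ℂ) * Complex.exp (starRingEnd ℂ (Complex.I * l * x))) =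
        ((c k * c l : ℝ) : ℂ) * Complex.exp (((k - l : ℝ) * x : ℝ) * Complex.I) by
      rw [mul_mul_mul_comm, ← Complex.exp_add, map_mul, map_mul, Complex.conj_I,
        Complex.conj_natCast, Complex.conj_ofReal]
      push_cast
      ring_nf]
    rw [Complex.re_ofReal_mul, Complex.exp_ofReal_mul_I_re]
  rw [← Complex.ofReal_re (‖_‖ ^ 2), Complex.ofReal_pow, ← Complex.mul_conj', map_sum, sum_mul_sum,
    Complex.re_sum]
  exact sum_congr rfl fun k _ => (Complex.re_sum _ _).trans (sum_congr rfl fun l _ => hterm k l)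

lemma sum_range_sum_range_add_sum_diag {M : Type*} [AddCommMonoid M] {g : ℕ → ℕ → M}
    (hg : ∀ k l, g k l = g l k) (N : ℕ) :
    ∑ k ∈ range N, ∑ l ∈ range N, g k l + ∑ k ∈ range N, g k k =
      2 • ∑ k ∈ range N, ∑ l ∈ range (k + 1), g k l := by
  induction N with
  | zero => simp
  | succ N ih =>
    have hcol : ∑ k ∈ range N, g k N = ∑ l ∈ range N, g N l := sum_congr rfl fun k _ => hg k N
    rw [sum_range_succ (fun k => ∑ l ∈ range (k + 1), g k l), smul_add, ← ih]
    simp only [sum_range_succ, sum_add_distrib, hcol, smul_add]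
    abel

lemma sum_range_sum_range_succ_mul_cos_sub {c : ℕ → ℝ} {N : ℕ} (hc : ∀ k, N ≤ k → c k = 0)
    (x : ℝ) :
    ∑ k ∈ range N, ∑ l ∈ range (k + 1), c k * c l * Real.cos ((k - l : ℝ) * x) =
      ∑ j ∈ range N, (∑ l ∈ range N, c l * c (l + j)) * Real.cos (j * x) := by
  set f : ℕ → ℕ → ℝ := fun l j => c l * c (l + j) * Real.cos (j * x)
  calc _ = ∑ k ∈ range N, ∑ l ∈ range (k + 1), f l (k - l) := by
        refine sum_congr rfl fun k _ => sum_congr rfl fun l hl => ?_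
        have hlk : l ≤ k := Nat.lt_succ_iff.mp (mem_range.mp hl)
        simp only [f, Nat.add_sub_cancel' hlk, Nat.cast_sub hlk]
        ring
    _ = ∑ l ∈ range N, ∑ j ∈ range (N - l), f l j := sum_range_diag_flip N f
    _ = ∑ l ∈ range N, ∑ j ∈ range N, f l j := by
        refine sum_congr rfl fun l _ => sum_subset (range_subset_range.mpr (N.sub_le l)) ?_
        intro j _ hj
        rw [mem_range, not_lt] at hj
        simp only [f, hc (l + j) (by omega), mul_zero, zero_mul]
    _ = _ := by rw [sum_comm]; simp only [f, sum_mul]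

lemma sum_range_sum_range_mul_cos_sub {c : ℕ → ℝ} {N : ℕ} (hc : ∀ k, N ≤ k → c k = 0) (x : ℝ) :
    ∑ k ∈ range N, ∑ l ∈ range N, c k * c l * Real.cos ((k - l : ℝ) * x) =
      ∑ j ∈ range N, (if j = 0 then ∑ k ∈ range N, c k ^ 2
        else 2 * ∑ k ∈ range N, c k * c (k + j)) * Real.cos (j * x) := by
  have hsymm := sum_range_sum_range_add_sum_diag
    (g := fun k l => c k * c l * Real.cos ((k - l : ℝ) * x))
    (fun k l => by rw [mul_comm (c k), ← Real.cos_neg, ← neg_mul, neg_sub]) N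
  simp only [sub_self, zero_mul, Real.cos_zero, mul_one, nsmul_eq_mul,
    sum_range_sum_range_succ_mul_cos_sub hc] at hsymm
  have hsplit : ∑ j ∈ range N, (if j = 0 then ∑ k ∈ range N, c k ^ 2
        else 2 * ∑ k ∈ range N, c k * c (k + j)) * Real.cos (j * x) =
      2 * ∑ j ∈ range N, (∑ l ∈ range N, c l * c (l + j)) * Real.cos (j * x) -
        ∑ k ∈ range N, c k * c k := by
    cases N with
    | zero => simp
    | succ n =>
      rw [sum_range_succ' _ n,
        sum_range_succ' (fun j => (∑ l ∈ range (n + 1), c l * c (l + j)) * Real.cos (j * x)) n]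
      simp only [Nat.add_one_ne_zero, ↓reduceIte, Nat.cast_zero, zero_mul, Real.cos_zero,
        add_zero, mul_one, sq, mul_assoc, ← mul_sum]
      ring
  linear_combination hsymm - hsplit

lemma cCoeff_eq_zero {k : ℕ} (hk : 17 ≤ k) : cCoeff k = 0 :=
  List.getD_eq_default _ _ (by simpa using hk)

lemma Ptrig_eq_sum_cos (x : ℝ) : Ptrig x = ∑ k ∈ range 17, aCoeff k * Real.cos (k * x) := by
  rw [Ptrig, norm_sum_mul_exp_sq, sum_range_sum_range_mul_cos_sub (fun k => cCoeff_eq_zero) x,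
    mul_sum]
  refine sum_congr rfl fun j _ => ?_
  rw [aCoeff, ← ite_div]
  ring

lemma aCoeff_nonneg (k : ℕ) : 0 ≤ aCoeff k := by
  rcases Nat.lt_or_ge k 17 with hk | hk
  · interval_cases k <;>
      simp only [aCoeff, cCoeff, sum_range_succ, sum_range_zero, List.getD_cons_succ,
        List.getD_cons_zero] <;>
      norm_num
  · have hzero : ∀ i ∈ range 17, cCoeff i * cCoeff (i + k) = 0 := fun i _ => by
      rw [cCoeff_eq_zero (k := i + k) (by omega), mul_zero]
    simp [aCoeff, sum_eq_zero hzero, show k ≠ 0 by omega]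

lemma aCoeff_zero : aCoeff 0 = 1 := by
  simp only [aCoeff, cCoeff, sum_range_succ, sum_range_zero, List.getD_cons_succ,
    List.getD_cons_zero]
  norm_num

lemma aCoeff_one : aCoeff 1 = 865534 / 497079 := by
  simp only [aCoeff, cCoeff, sum_range_succ, sum_range_zero, List.getD_cons_succ,
    List.getD_cons_zero]
  norm_num

theorem stmt_4 :
    (∀ x : ℝ, Ptrig x ≥ 0) ∧
    (∀ x : ℝ, Ptrig x = ∑ k ∈ range 17, aCoeff k * Real.cos (k * x)) ∧
    (∀ k : ℕ, 0 ≤ aCoeff k) ∧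
    aCoeff 0 = 1 ∧
    aCoeff 1 = 865534 / 497079 ∧
    aCoeff 0 < aCoeff 1 := by
  refine ⟨fun x => by rw [Ptrig]; positivity, Ptrig_eq_sum_cos, aCoeff_nonneg, aCoeff_zero,
    aCoeff_one, ?_⟩
  rw [aCoeff_zero, aCoeff_one]
  norm_num
end

section
/- For the trigonometric polynomial P(x) = (1/14912370)|Σ_{k=0}^{16} c_k e^{ikx}|^2 with coefficients c_k as specified, the sum of the cosine coefficients a := Σ_{k=1}^{16} a_k equals 2919857/828465. -/
set_option maxHeartbeats 2000000

open Finset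

theorem stmt_5 : ∑ k ∈ Icc 1 16, aCoeff k = 2919857 / 828465 := by
  rw [show (Icc 1 16 : Finset ℕ) = Finset.range 17 \ {0} by decide]
  rw [Finset.sum_sdiff_eq_sub (by decide), Finset.sum_singleton]
  simp only [aCoeff, if_true, if_neg, Finset.sum_range_succ, Finset.sum_range_zero]
  norm_num [cCoeff]
end

section
/- Let U(y) = |log(y/2) − 2/(1+4y²)| + 2/(3y) + 1/(8y²) for y ≥ 1/2. Then U(y) ≤ log y for all y ≥ 2. -/
/-! For `y ≥ 2` we have `log (y/2) ≥ 0`, so the absolute value is at most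
`log y - log 2 + 2/(1+4y²)`. The three rational correction terms are decreasing in `y`,
hence at most their values `2/17 + 1/3 + 1/32 < 1/2` at `y = 2`, and `1/2 < log 2`. -/

lemma abs_sub_le_add_of_nonneg {G : Type*} [AddCommGroup G] [LinearOrder G]
    [IsOrderedAddMonoid G] {a b : G} (ha : 0 ≤ a) (hb : 0 ≤ b) : |a - b| ≤ a + b := by
  simpa only [abs_of_nonneg ha, abs_of_nonneg hb] using abs_sub a b

lemma correction_terms_le_half {y : ℝ} (hy : 2 ≤ y) :
    2/(1 + 4*y^2) + 2/(3*y) + 1/(8*y^2) ≤ 1/2 := by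
  have h₁ : 2/(1 + 4*y^2) ≤ 2/17 :=
    div_le_div_of_nonneg_left (by norm_num) (by norm_num) (by nlinarith)
  have h₂ : 2/(3*y) ≤ 1/3 := by
    rw [div_le_div_iff₀ (by linarith) (by norm_num)]
    linarith
  have h₃ : 1/(8*y^2) ≤ 1/32 := by
    rw [div_le_div_iff₀ (by positivity) (by norm_num)]
    nlinarith
  linarith

lemma half_lt_log_two : (1/2 : ℝ) < Real.log 2 := by
  linarith [Real.log_two_gt_d9]

theorem stmt_7 (y : ℝ) (hy : 2 ≤ y) :
    |Real.log (y/2) - 2/(1 + 4*y^2)| + 2/(3*y) + 1/(8*y^2) ≤ Real.log y := by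
  have hlog : Real.log (y/2) = Real.log y - Real.log 2 :=
    Real.log_div (by positivity) two_ne_zero
  have habs : |Real.log (y/2) - 2/(1 + 4*y^2)| ≤ Real.log (y/2) + 2/(1 + 4*y^2) :=
    abs_sub_le_add_of_nonneg (Real.log_nonneg (by linarith)) (by positivity)
  linarith [correction_terms_le_half hy, half_lt_log_two]
end
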